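/- arXiv:1910.05353 — 4 statements merged into one kernel-verified Lean document; each statement's English description precedes it below -/
import Mathlib

section
/- Let φ satisfy the weight-0, index-t modular law. Then for all integers r, s and every τ in the upper half-plane, the specialization χ_{r,s} satisfies χ_{r,s}(−1/τ) = exp(−4πi·r·s·t/b²) · χ_{s,−r}(τ). -/
/-! Apply the modular law for `S = [[0,-1],[1,0]]` at `z = (sτ - r)/b`: then `z/τ` is the
elliptic argument of `χ_{r,s}(-1/τ)`, and the two exponential factors combine into
`exp(-4πi·r·s·t/b²)` times the one of `χ_{s,-r}(τ)`. -/

open Complex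

/-- The specialization `χ_{r,s}(τ) := exp(2πi·t·r²·τ/b²) · φ(τ, (rτ+s)/b)`. -/
noncomputable def chi (t b : ℤ) (φ : ℂ → ℂ → ℂ) (r s : ℤ) (τ : ℂ) : ℂ :=
  Complex.exp (2 * Real.pi * Complex.I * t * r ^ 2 * τ / b ^ 2) * φ τ ((r * τ + s) / b)

theorem modular_law_S {t : ℤ} {φ : ℂ → ℂ → ℂ}
    (hmod : ∀ a β c d : ℤ, a * d - β * c = 1 → ∀ τ z : ℂ, 0 < τ.im →
      φ ((a * τ + β) / (c * τ + d)) (z / (c * τ + d)) =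
        Complex.exp (2 * Real.pi * Complex.I * t * c * z ^ 2 / (c * τ + d)) * φ τ z)
    {τ : ℂ} (hτ : 0 < τ.im) (z : ℂ) :
    φ (-1 / τ) (z / τ) = Complex.exp (2 * Real.pi * Complex.I * t * z ^ 2 / τ) * φ τ z := by
  simpa using hmod 0 (-1) 1 0 (by norm_num) τ z hτ

theorem specialization_arg_neg_inv {τ : ℂ} (hτ : τ ≠ 0) (b r s : ℂ) :
    (r * (-1 / τ) + s) / b = (s * τ + -r) / b / τ := by
  field_simp
  ring

theorem specialization_exponent_neg_inv {τ : ℂ} (hτ : τ ≠ 0) (t b r s : ℂ) :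
    2 * Real.pi * I * t * r ^ 2 * (-1 / τ) / b ^ 2 +
        2 * Real.pi * I * t * ((s * τ + -r) / b) ^ 2 / τ =
      -(4 * Real.pi * I * r * s * t) / b ^ 2 + 2 * Real.pi * I * t * s ^ 2 * τ / b ^ 2 := by
  field_simp
  ring

theorem chi_S_transform_general (t b : ℤ) (φ : ℂ → ℂ → ℂ)
    (hmod : ∀ a β c d : ℤ, a * d - β * c = 1 → ∀ τ z : ℂ, 0 < τ.im →
      φ ((a * τ + β) / (c * τ + d)) (z / (c * τ + d)) =
        Complex.exp (2 * Real.pi * Complex.I * t * c * z ^ 2 / (c * τ + d)) * φ τ z) :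
    ∀ r s : ℤ, ∀ τ : ℂ, 0 < τ.im →
      chi t b φ r s (-1 / τ) =
        Complex.exp (-(4 * Real.pi * Complex.I * r * s * t) / b ^ 2) * chi t b φ s (-r) τ := by
  intro r s τ hτ
  have hτ0 : τ ≠ 0 := fun h => by simp [h] at hτ
  unfold chi
  rw [specialization_arg_neg_inv hτ0, modular_law_S hmod hτ, ← mul_assoc, ← Complex.exp_add,
    specialization_exponent_neg_inv hτ0, Complex.exp_add, mul_assoc, Int.cast_neg]

/-- If `φ` satisfies the weight-0, index-`t` modular law, then
`χ_{r,s}(−1/τ) = exp(−4πi·r·s·t/b²) · χ_{s,−r}(τ)` for all `τ` in the upper half-plane. -/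
theorem chi_S_transform (t b : ℤ) (ht : 1 ≤ t) (hb : 1 ≤ b) (φ : ℂ → ℂ → ℂ)
    (hmod : ∀ a β c d : ℤ, a * d - β * c = 1 → ∀ τ z : ℂ, 0 < τ.im →
      φ ((a * τ + β) / (c * τ + d)) (z / (c * τ + d)) =
        Complex.exp (2 * Real.pi * Complex.I * t * c * z ^ 2 / (c * τ + d)) * φ τ z) :
    ∀ r s : ℤ, ∀ τ : ℂ, 0 < τ.im →
      chi t b φ r s (-1 / τ) =
        Complex.exp (-(4 * Real.pi * Complex.I * r * s * t) / b ^ 2) * chi t b φ s (-r) τ :=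
  chi_S_transform_general t b φ hmod
end

section
/- Let φ satisfy both the weight-0, index-t modular law and the index-t elliptic law. Then for all integers r, s there exist a matrix g ∈ SL(2,ℤ), an integer r′, and a complex number u with |u| = 1, such that χ_{r,s}(g·τ) = u · χ_{r′,0}(τ) for every τ in the upper half-plane (where g acts on ℍ by Möbius transformation). -/
/-!
Write `(r, s) = n • (d, -β)` with `n = gcd r s` and `g = !![a, β; c, d] ∈ SL(2, ℤ)` (Bézout).
Then `n d · gτ - n β = n τ / (c τ + d)`, so the modular law at `z = n τ / b` turns
`χ_{r,s}(gτ)` into `χ_{n,0}(τ)` times `exp(2πi t n² d β / b²)`, a phase since its exponent is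
purely imaginary.
-/

open Complex

open scoped MatrixGroups Real

section MoebiusAlgebra

variable {K : Type*} [Field K] {a b c d τ : K}

lemma mul_moebius_sub (h : a * d - b * c = 1) (hD : c * τ + d ≠ 0) :
    d * ((a * τ + b) / (c * τ + d)) - b = τ / (c * τ + d) := by
  rw [mul_div_assoc', div_sub' hD, div_left_inj' hD]
  linear_combination τ * h

lemma sq_mul_moebius_add (h : a * d - b * c = 1) (hD : c * τ + d ≠ 0) :
    d ^ 2 * ((a * τ + b) / (c * τ + d)) + c * τ ^ 2 / (c * τ + d) = d * b + τ := by
  rw [mul_div_assoc', ← add_div, div_eq_iff hD]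
  linear_combination d * τ * h

end MoebiusAlgebra

lemma exists_mul_SL2_col_one_eq (x y : ℤ) :
    ∃ (g : SL(2, ℤ)) (n : ℤ), n * g 0 1 = x ∧ n * g 1 1 = y := by
  rcases (Int.gcd x y).eq_zero_or_pos with h | h
  · obtain ⟨rfl, rfl⟩ := Int.gcd_eq_zero_iff.mp h
    exact ⟨1, 0, by simp, by simp⟩
  obtain ⟨n, x', y', -, hcop, rfl, rfl⟩ := Int.exists_gcd_one' h
  obtain ⟨u, v, huv⟩ := Int.isCoprime_iff_gcd_eq_one.mpr hcop
  refine ⟨⟨!![v, x'; -u, y'], ?_⟩, n, ?_, ?_⟩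
  · rw [Matrix.det_fin_two_of]
    linear_combination huv
  all_goals simp [mul_comm]

namespace Matrix.SpecialLinearGroup

lemma det_fin_two_eq (g : SL(2, ℤ)) : g 0 0 * g 1 1 - g 0 1 * g 1 0 = 1 := by
  rw [← Matrix.det_fin_two]
  exact g.det_coe

lemma denom_ne_zero_of_im_pos (g : SL(2, ℤ)) {τ : ℂ} (hτ : 0 < τ.im) :
    (g 1 0 * τ + g 1 1 : ℂ) ≠ 0 := by
  refine UpperHalfPlane.linear_ne_zero_of_im (cd := fun i => (g 1 i : ℝ)) hτ.ne' fun h => ?_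
  have h0 : g 1 0 = 0 := by simpa using congrFun h 0
  have h1 : g 1 1 = 0 := by simpa using congrFun h 1
  simpa [h0, h1] using g.det_fin_two_eq

end Matrix.SpecialLinearGroup

theorem chi_moebius (t b : ℤ) (φ : ℂ → ℂ → ℂ)
    (hmod : ∀ a β c d : ℤ, a * d - β * c = 1 → ∀ τ z : ℂ, 0 < τ.im →
      φ ((a * τ + β) / (c * τ + d)) (z / (c * τ + d)) =
        Complex.exp (2 * Real.pi * Complex.I * t * c * z ^ 2 / (c * τ + d)) * φ τ z)
    (g : SL(2, ℤ)) (n : ℤ) {τ : ℂ} (hτ : 0 < τ.im) :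
    chi t b φ (n * g 1 1) (-(n * g 0 1)) ((g 0 0 * τ + g 0 1) / (g 1 0 * τ + g 1 1)) =
      exp (2 * π * I * t * n ^ 2 * g 1 1 * g 0 1 / b ^ 2) * chi t b φ n 0 τ := by
  have hdet : (g 0 0 * g 1 1 - g 0 1 * g 1 0 : ℂ) = 1 := by exact_mod_cast g.det_fin_two_eq
  have hD := g.denom_ne_zero_of_im_pos hτ
  have harg : (((n * g 1 1 : ℤ) : ℂ) * ((g 0 0 * τ + g 0 1) / (g 1 0 * τ + g 1 1)) +
      ((-(n * g 0 1) : ℤ) : ℂ)) / b = n * τ / b / (g 1 0 * τ + g 1 1) := by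
    rw [div_right_comm]
    congr 1
    push_cast
    linear_combination n * mul_moebius_sub hdet hD
  rw [chi, chi, harg, hmod _ _ _ _ g.det_fin_two_eq _ _ hτ, Int.cast_zero, add_zero,
    ← mul_assoc, ← mul_assoc, ← exp_add, ← exp_add]
  congr 2
  push_cast
  linear_combination 2 * π * I * t * n ^ 2 / b ^ 2 * sq_mul_moebius_add hdet hD

theorem chi_related_to_s_zero_general (t b : ℤ) (φ : ℂ → ℂ → ℂ)
    (hmod : ∀ a β c d : ℤ, a * d - β * c = 1 → ∀ τ z : ℂ, 0 < τ.im →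
      φ ((a * τ + β) / (c * τ + d)) (z / (c * τ + d)) =
        Complex.exp (2 * Real.pi * Complex.I * t * c * z ^ 2 / (c * τ + d)) * φ τ z) :
    ∀ r s : ℤ, ∃ g : Matrix.SpecialLinearGroup (Fin 2) ℤ, ∃ r' : ℤ, ∃ u : ℂ,
      ‖u‖ = 1 ∧
      ∀ τ : ℂ, 0 < τ.im →
        chi t b φ r s ((g 0 0 * τ + g 0 1) / (g 1 0 * τ + g 1 1)) =
          u * chi t b φ r' 0 τ := by
  intro r s
  obtain ⟨g, n, hs, rfl⟩ := exists_mul_SL2_col_one_eq (-s) r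
  obtain rfl : s = -(n * g 0 1) := by rw [hs, neg_neg]
  refine ⟨g, n, _, ?_, fun τ hτ => chi_moebius t b φ hmod g n hτ⟩
  have hreal : 2 * π * I * t * n ^ 2 * g 1 1 * g 0 1 / b ^ 2 =
      ((2 * π * t * n ^ 2 * g 1 1 * g 0 1 / b ^ 2 : ℝ) : ℂ) * I := by
    push_cast
    ring
  rw [hreal, norm_exp_ofReal_mul_I]

/-- If `φ` satisfies both the weight-0, index-`t` modular law and the index-`t`
elliptic law, then any `χ_{r,s}` can be related, via a Möbius transformation by some
`g ∈ SL(2,ℤ)` and a phase `u` of modulus one, to some `χ_{r',0}`. -/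
theorem chi_related_to_s_zero (t b : ℤ) (ht : 1 ≤ t) (hb : 1 ≤ b) (φ : ℂ → ℂ → ℂ)
    (hmod : ∀ a β c d : ℤ, a * d - β * c = 1 → ∀ τ z : ℂ, 0 < τ.im →
      φ ((a * τ + β) / (c * τ + d)) (z / (c * τ + d)) =
        Complex.exp (2 * Real.pi * Complex.I * t * c * z ^ 2 / (c * τ + d)) * φ τ z)
    (hell : ∀ lam mu : ℤ, ∀ τ z : ℂ, 0 < τ.im →
      φ τ (z + lam * τ + mu) =
        Complex.exp (-(2 * Real.pi * Complex.I * t * (lam ^ 2 * τ + 2 * lam * z + mu))) * φ τ z) :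
    ∀ r s : ℤ, ∃ g : Matrix.SpecialLinearGroup (Fin 2) ℤ, ∃ r' : ℤ, ∃ u : ℂ,
      ‖u‖ = 1 ∧
      ∀ τ : ℂ, 0 < τ.im →
        chi t b φ r s ((g 0 0 * τ + g 0 1) / (g 1 0 * τ + g 1 1)) =
          u * chi t b φ r' 0 τ :=
  chi_related_to_s_zero_general t b φ hmod
end

section
/- Let t ≥ 1 be an integer and let c : ℤ×ℤ → ℂ satisfy the shift identity c(n, l) = c(n + lλ + tλ², l + 2tλ) for all integers n, l, λ, together with c(n, l) = 0 whenever n < 0. Then c(n, l) = 0 whenever the discriminant satisfies 4tn − l² < −t². -/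
/-!
The shift `(n, l) ↦ (n + lλ + tλ², l + 2tλ)` preserves the discriminant `4tn − l²` and moves `l`
by multiples of `2t`, so it can bring `l` into `(−t, t]`. If the discriminant is below `−t²`, the
shifted pair then has `4tn' < −t² + l'² ≤ 0`, hence `n' < 0`, where `c` vanishes.
-/

theorem discriminant_shift {R : Type*} [CommRing R] (t n l lam : R) :
    4 * t * (n + l * lam + t * lam ^ 2) - (l + 2 * t * lam) ^ 2 = 4 * t * n - l ^ 2 := by
  ring

theorem exists_sq_add_two_mul_mul_le (t l : ℤ) (ht : 0 < t) :
    ∃ lam : ℤ, (l + 2 * t * lam) ^ 2 ≤ t ^ 2 := by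
  have hdiv := Int.emod_add_mul_ediv (t - l) (2 * t)
  have hr₀ := Int.emod_nonneg (t - l) (by omega : 2 * t ≠ 0)
  have hr₁ := Int.emod_lt_of_pos (t - l) (by omega : 0 < 2 * t)
  refine ⟨(t - l) / (2 * t), ?_⟩
  nlinarith

/-- If `c` satisfies the shift identity `c(n,l) = c(n + lλ + tλ², l + 2tλ)` and
vanishes for `n < 0`, then `c(n,l) = 0` whenever `4tn − l² < −t²`. -/
theorem weak_jacobi_polarity_bound (t : ℤ) (ht : 1 ≤ t) (c : ℤ → ℤ → ℂ)
    (hshift : ∀ n l lam : ℤ, c n l = c (n + l * lam + t * lam ^ 2) (l + 2 * t * lam))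
    (hvanish : ∀ n l : ℤ, n < 0 → c n l = 0) :
    ∀ n l : ℤ, 4 * t * n - l ^ 2 < -t ^ 2 → c n l = 0 := by
  intro n l hdisc
  obtain ⟨lam, hlam⟩ := exists_sq_add_two_mul_mul_le t l (by omega)
  rw [hshift n l lam]
  apply hvanish
  have hneg : 4 * t * (n + l * lam + t * lam ^ 2) < 0 := by
    linarith [discriminant_shift t n l lam]
  exact neg_of_mul_neg_right hneg (by omega)
end

section
/- Let Γ be a finite-index subgroup of SL(2,ℤ) and let h : ℍ → ℂ be a holomorphic function on the upper half-plane such that h(γ·τ) = h(τ) for every γ ∈ Γ and τ ∈ ℍ (where γ acts by Möbius transformation). Suppose further that for every g ∈ SL(2,ℤ) the function τ ↦ h(g·τ) is bounded on the set {τ ∈ ℍ : Im τ ≥ 1}. Then h is constant. -/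
/-!
On `ℍ`, `h` is a modular form of weight `0` for `Γ`: in weight `0` the slash action is
`f ∣ γ = f ∘ γ`, so invariance is slash-invariance, and since every cusp of `Γ` is an
`SL(2,ℤ)`-translate of `∞`, boundedness of `τ ↦ h(g·τ)` near `∞` for all `g` is boundedness at
every cusp. A weight `0` modular form for a finite-index subgroup is constant: the norm of
`f - f(i)` down to `SL(2,ℤ)` is a level-one form of weight `0`, hence constant, and it vanishes
at `i`.
-/

open UpperHalfPlane MatrixGroups ModularForm
open scoped Manifold

lemma UpperHalfPlane.coe_SL2Z_smul (g : SL(2, ℤ)) (τ : ℍ) :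
    ((g • τ : ℍ) : ℂ) = (g 0 0 * τ + g 0 1) / (g 1 0 * τ + g 1 1) := by
  rw [coe_specialLinearGroup_apply]
  simp

lemma ModularForm.SL_slash_zero_apply (f : ℍ → ℂ) (g : SL(2, ℤ)) (τ : ℍ) :
    (f ∣[(0 : ℤ)] g) τ = f (g • τ) := by
  simp [SL_slash_apply]

def ModularForm.weightZeroOfInvariant (Γ : Subgroup SL(2, ℤ)) (f : ℍ → ℂ)
    (hf : MDifferentiable 𝓘(ℂ) 𝓘(ℂ) f) (hinv : ∀ γ ∈ Γ, ∀ τ : ℍ, f (γ • τ) = f τ)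
    (hbdd : ∀ g : SL(2, ℤ), IsBoundedAtImInfty fun τ ↦ f (g • τ)) : ModularForm Γ 0 where
  toFun := f
  slash_action_eq' := by
    rintro _ ⟨γ, hγ, rfl⟩
    ext τ
    exact (SL_slash_zero_apply f γ τ).trans (hinv γ hγ τ)
  holo' := hf
  bdd_at_cusps' hc := by
    rw [OnePoint.isBoundedAt_iff_forall_SL2Z (hc.mono (Subgroup.map_le_range _ _))]
    intro g _
    convert hbdd g using 1
    ext τ
    exact SL_slash_zero_apply f g τ

/-- A holomorphic function on the upper half-plane which is invariant under a
finite-index subgroup `Γ` of `SL(2,ℤ)` and bounded near every cusp (i.e. for every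
`g ∈ SL(2,ℤ)` the function `τ ↦ h(g·τ)` is bounded on `{Im τ ≥ 1}`) is constant. -/
theorem invariant_bounded_holomorphic_is_constant
    (Γ : Subgroup (Matrix.SpecialLinearGroup (Fin 2) ℤ)) (hΓ : Γ.FiniteIndex)
    (h : ℂ → ℂ)
    (hhol : DifferentiableOn ℂ h {τ : ℂ | 0 < τ.im})
    (hinv : ∀ γ ∈ Γ, ∀ τ : ℂ, 0 < τ.im →
      h ((γ 0 0 * τ + γ 0 1) / (γ 1 0 * τ + γ 1 1)) = h τ)
    (hbdd : ∀ g : Matrix.SpecialLinearGroup (Fin 2) ℤ, ∃ M : ℝ, ∀ τ : ℂ, 1 ≤ τ.im →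
      ‖h ((g 0 0 * τ + g 0 1) / (g 1 0 * τ + g 1 1))‖ ≤ M) :
    ∃ C : ℂ, ∀ τ : ℂ, 0 < τ.im → h τ = C := by
  have hmdiff : MDifferentiable 𝓘(ℂ) 𝓘(ℂ) fun τ : ℍ ↦ h τ := by
    rw [mdifferentiable_iff]
    exact hhol.congr fun z hz ↦ by simp [ofComplex_apply_of_im_pos hz]
  have hinv' : ∀ γ ∈ Γ, ∀ τ : ℍ, h ↑(γ • τ) = h τ := fun γ hγ τ ↦ by
    rw [coe_SL2Z_smul]
    exact hinv γ hγ τ τ.im_pos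
  have hbdd' : ∀ g : SL(2, ℤ), IsBoundedAtImInfty fun τ : ℍ ↦ h ↑(g • τ) := fun g ↦ by
    obtain ⟨M, hM⟩ := hbdd g
    refine isBoundedAtImInfty_iff.mpr ⟨M, 1, fun τ hτ ↦ ?_⟩
    rw [coe_SL2Z_smul]
    exact hM τ hτ
  obtain ⟨C, hC⟩ := (weightZeroOfInvariant Γ _ hmdiff hinv' hbdd').eq_const_of_weight_zero
  exact ⟨C, fun τ hτ ↦ congrFun hC ⟨τ, hτ⟩⟩
end
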